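/- arXiv:2103.11134 — 3 statements merged into one kernel-verified Lean document; each statement's English description precedes it below -/
import Mathlib

section
/- Every Lyndon word of length at least 2 admits a standard factorization: u = vw where v and w are Lyndon words, w is the lexicographically smallest proper nonempty suffix of u, and v < w. -/
/-!
Take for `w` the least proper nonempty suffix of `u = v ++ w`. A proper suffix of `w` is a
shorter proper suffix of `u`, hence strictly larger than `w`, so `w` is Lyndon; and
`v < v ++ w < w` because `u` is Lyndon. If `v = a ++ b` with `b ≤ v`, then `u < b ++ w` rules
out `b ++ w < v ++ w`, so `b` is a proper prefix of `v`, say `v = b ++ c`; cancelling `b` in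
`b ++ c ++ w < b ++ w` gives `c ++ w < w`, contradicting the choice of `w`.
-/

def IsLyndon {α : Type*} [LinearOrder α] (u : List α) : Prop :=
  u ≠ [] ∧ ∀ v w : List α, v ≠ [] → w ≠ [] → u = v ++ w → List.Lex (· < ·) u w

namespace List

theorem Lex.append_right_or_isPrefix {α : Type*} {r : α → α → Prop} {b v : List α}
    (w : List α) (h : Lex r b v) : Lex r (b ++ w) (v ++ w) ∨ b <+: v := by
  induction h with
  | nil => exact .inr nil_prefix
  | cons _ ih => exact ih.imp .cons (cons_prefix_cons.2 ⟨rfl, ·⟩)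
  | rel h => exact .inl (.rel h)

variable {α : Type*} [LinearOrder α]

theorem lt_append_of_ne_nil (s : List α) {t : List α} (ht : t ≠ []) : s < s ++ t := by
  obtain ⟨a, l, rfl⟩ := exists_cons_of_ne_nil ht
  simpa using append_left_lt (l₁ := s) (nil_lt_cons a l)

theorem lt_of_append_lt_append_left (p : List α) {a b : List α} (h : p ++ a < p ++ b) :
    a < b := by
  induction p with
  | nil => exact h
  | cons x p ih => exact ih (cons_lt_cons_self.1 h)

theorem exists_append_forall_le_of_two_le_length {u : List α} (hlen : 2 ≤ u.length) :
    ∃ v w, v ≠ [] ∧ w ≠ [] ∧ u = v ++ w ∧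
      ∀ v' w', v' ≠ [] → w' ≠ [] → u = v' ++ w' → w ≤ w' := by
  obtain ⟨k, hk, hmin⟩ :=
    Finset.exists_min_image (Finset.Ico 1 u.length) (u.drop ·) ⟨1, by simp; omega⟩
  rw [Finset.mem_Ico] at hk
  refine ⟨u.take k, u.drop k, ?_, ?_, (take_append_drop k u).symm, ?_⟩
  · rw [← length_pos_iff, length_take]; omega
  · rw [← length_pos_iff, length_drop]; omega
  · rintro v' w' hv' hw' rfl
    have hv'_len : v'.length ∈ Finset.Ico 1 (v' ++ w').length :=
      Finset.mem_Ico.2 ⟨length_pos_iff.2 hv', by simp [length_pos_iff.2 hw']⟩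
    simpa using hmin v'.length hv'_len

end List

open List

section Lyndon

variable {α : Type*} [LinearOrder α] {v w : List α}

theorem isLyndon_right_of_forall_le (hw : w ≠ [])
    (hmin : ∀ v' w', v' ≠ [] → w' ≠ [] → v ++ w = v' ++ w' → w ≤ w') : IsLyndon w := by
  refine ⟨hw, fun a b ha hb hab => ?_⟩
  subst hab
  refine (hmin (v ++ a) b (by simp [ha]) hb (append_assoc ..).symm).lt_of_ne ?_
  simpa using ha

theorem IsLyndon.lt_of_append (hu : IsLyndon (v ++ w)) (hv : v ≠ []) (hw : w ≠ []) : v < w :=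
  (lt_append_of_ne_nil v hw).trans (hu.2 v w hv hw rfl)

theorem IsLyndon.left_of_forall_le (hu : IsLyndon (v ++ w)) (hv : v ≠ [])
    (hmin : ∀ v' w', v' ≠ [] → w' ≠ [] → v ++ w = v' ++ w' → w ≤ w') : IsLyndon v := by
  refine ⟨hv, fun a b ha hb hab => ?_⟩
  subst hab
  have hlt : a ++ b ++ w < b ++ w := hu.2 a (b ++ w) ha (by simp [hb]) (append_assoc ..)
  show a ++ b < b
  by_contra! hba
  rcases hba.lt_or_eq with hb_lt | hb_eq
  · rcases Lex.append_right_or_isPrefix w hb_lt with hlt' | ⟨c, hc⟩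
    · exact lt_asymm hlt hlt'
    · have hc : a ++ b = b ++ c := hc.symm
      have hc_ne : c ≠ [] := by rintro rfl; exact ha (by simpa using hc)
      have : c ++ w < w := lt_of_append_lt_append_left b (by rwa [hc, append_assoc] at hlt)
      exact (hmin b (c ++ w) hb (by simp [hc_ne]) (by rw [hc, append_assoc])).not_gt this
  · exact ha (by simpa using hb_eq.symm)

end Lyndon

/-- Every Lyndon word of length at least 2 admits a standard factorization `u = v ++ w`
with `v`, `w` Lyndon, `w` the lexicographically smallest proper nonempty suffix of `u`,
and `v < w`. -/
theorem lyndon_standard_factorization {α : Type*} [LinearOrder α] (u : List α)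
    (hu : IsLyndon u) (hlen : 2 ≤ u.length) :
    ∃ v w : List α, IsLyndon v ∧ IsLyndon w ∧ u = v ++ w ∧
      List.Lex (· < ·) v w ∧
      (∀ v' w' : List α, v' ≠ [] → w' ≠ [] → u = v' ++ w' →
        w = w' ∨ List.Lex (· < ·) w w') := by
  obtain ⟨v, w, hv, hw, rfl, hmin⟩ := exists_append_forall_le_of_two_le_length hlen
  exact ⟨v, w, hu.left_of_forall_le hv hmin, isLyndon_right_of_forall_le hw hmin, rfl,
    hu.lt_of_append hv hw, fun v' w' hv' hw' h => (hmin v' w' hv' hw' h).eq_or_lt⟩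
end

section
/- Let F be a free group on generators x and y. Then the left-normed commutator (x, y, y, …, y) with m−1 occurrences of y (defined by c₂ = (x,y), c_k = (c_{k−1}, y)) lies in F_{(m)} but not in F_{(m+1)}, where F_{(i)} denotes the lower central series. -/
/-!
Send `x ↦ r 1` and `y ↦ sr 0` in the infinite dihedral group `D_∞ = ℤ ⋊ C₂`. Commuting a rotation
with a reflection doubles it up to sign, so `(x, y, …, y)` with `k` copies of `y` maps to the
rotation `r ((-2) ^ k)`. On the other hand, in every dihedral group the rotations by multiples
of `2 ^ k`, together with the reflections when `k = 0`, form a descending central series, so the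
`k`-th term of the lower central series consists of such rotations. As `2 ^ (k + 1)` does not
divide `(-2) ^ k` in `ℤ`, the image of the commutator leaves the next term.
-/

/-- The left-normed commutators `c₂ = (x,y)`, `c_k = (c_{k-1}, y)` in the free group on
two generators, where `(a,b) = a⁻¹b⁻¹ab`.  Here `leftComm k` is `c_{k+1}`, so
`leftComm (m-1)` has `m-1` occurrences of `y`. -/
def leftComm : ℕ → FreeGroup (Fin 2)
  | 0 => FreeGroup.of 0
  | k + 1 => (leftComm k)⁻¹ * (FreeGroup.of 1)⁻¹ * leftComm k * FreeGroup.of 1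

open scoped commutatorElement

theorem MonoidHom.map_mem_lowerCentralSeries {G H : Type*} [Group G] [Group H] (f : G →* H)
    {k : ℕ} {g : G} (hg : g ∈ Subgroup.lowerCentralSeries (⊤ : Subgroup G) k) :
    f g ∈ Subgroup.lowerCentralSeries (⊤ : Subgroup H) k := by
  have h : f g ∈ ((⊤ : Subgroup G).map f).lowerCentralSeries k := by
    rw [← Subgroup.map_lowerCentralSeries]
    exact Subgroup.mem_map_of_mem f hg
  exact Subgroup.lowerCentralSeries_mono k le_top h

namespace DihedralGroup

variable {n : ℕ}

def dyadicSeries (k : ℕ) : Subgroup (DihedralGroup n) where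
  carrier := {g | match g with
    | r i => (2 : ZMod n) ^ k ∣ i
    | sr _ => k = 0}
  one_mem' := dvd_zero _
  mul_mem' := by
    rintro (a | a) (b | b) ha hb
    · exact dvd_add ha hb
    · exact hb
    · exact ha
    · simp_all
  inv_mem' := by
    rintro (a | a) ha
    · exact dvd_neg.2 ha
    · exact ha

@[simp]
theorem r_mem_dyadicSeries {k : ℕ} {i : ZMod n} : r i ∈ dyadicSeries k ↔ (2 : ZMod n) ^ k ∣ i :=
  Iff.rfl

@[simp]
theorem sr_mem_dyadicSeries {k : ℕ} {i : ZMod n} : sr i ∈ dyadicSeries k ↔ k = 0 :=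
  Iff.rfl

theorem isDescendingCentralSeries_dyadicSeries :
    Subgroup.IsDescendingCentralSeries (dyadicSeries (n := n)) := by
  refine ⟨eq_top_iff.2 fun g _ => ?_, ?_⟩
  · rcases g with i | i <;> simp
  · rintro (a | a) k ha (b | b) <;>
      simp only [commutatorElement_def, r_mul_r, r_mul_sr, sr_mul_r, sr_mul_sr, inv_r, inv_sr,
        r_mem_dyadicSeries, sr_mem_dyadicSeries] at ha ⊢
    · simp
    · rw [show b - (b - a + -a) = 2 * a by ring, pow_succ']
      exact mul_dvd_mul_left 2 ha
    · subst ha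
      exact ⟨-b, by ring⟩
    · subst ha
      exact ⟨b - a, by ring⟩

theorem lowerCentralSeries_le_dyadicSeries (k : ℕ) :
    Subgroup.lowerCentralSeries (⊤ : Subgroup (DihedralGroup n)) k ≤ dyadicSeries k :=
  Subgroup.descending_central_series_ge_lower _ isDescendingCentralSeries_dyadicSeries k

def ofFreeGroup (n : ℕ) : FreeGroup (Fin 2) →* DihedralGroup n :=
  FreeGroup.lift ![r 1, sr 0]

@[simp]
theorem ofFreeGroup_of_zero : ofFreeGroup n (FreeGroup.of 0) = r 1 := by
  simp [ofFreeGroup]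

@[simp]
theorem ofFreeGroup_of_one : ofFreeGroup n (FreeGroup.of 1) = sr 0 := by
  simp [ofFreeGroup]

theorem ofFreeGroup_leftComm (k : ℕ) : ofFreeGroup n (leftComm k) = r ((-2) ^ k) := by
  induction k with
  | zero => simp [leftComm]
  | succ k ih =>
    simp only [leftComm, map_mul, map_inv, ih, ofFreeGroup_of_one, inv_r, inv_sr, r_mul_sr,
      sr_mul_r, sr_mul_sr]
    congr 1
    ring

end DihedralGroup

theorem leftComm_mem_lowerCentralSeries (k : ℕ) :
    leftComm k ∈ Subgroup.lowerCentralSeries (⊤ : Subgroup (FreeGroup (Fin 2))) k := by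
  induction k with
  | zero => exact Subgroup.mem_top _
  | succ k ih =>
    have h : leftComm (k + 1) = ⁅(leftComm k)⁻¹, (FreeGroup.of 1)⁻¹⁆ := by
      simp [leftComm, commutatorElement_def, mul_assoc]
    rw [h]
    exact Subgroup.commutator_mem_commutator (inv_mem ih) (Subgroup.mem_top _)

theorem leftComm_notMem_lowerCentralSeries_succ (k : ℕ) :
    leftComm k ∉ Subgroup.lowerCentralSeries (⊤ : Subgroup (FreeGroup (Fin 2))) (k + 1) := by
  intro h
  have hdvd := DihedralGroup.lowerCentralSeries_le_dyadicSeries (k + 1)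
    ((DihedralGroup.ofFreeGroup 0).map_mem_lowerCentralSeries h)
  rw [DihedralGroup.ofFreeGroup_leftComm, DihedralGroup.r_mem_dyadicSeries] at hdvd
  change (2 : ℤ) ^ (k + 1) ∣ (-2) ^ k at hdvd
  have hnat : 2 ^ (k + 1) ∣ 2 ^ k := by
    simpa [Int.natAbs_pow] using Int.natAbs_dvd_natAbs.2 hdvd
  exact absurd ((Nat.pow_dvd_pow_iff_le_right one_lt_two).1 hnat) (by omega)

/-- In the free group `F` on `{x, y}`, the left-normed commutator `(x, y, …, y)` with
`m-1` occurrences of `y` lies in `F_{(m)}` but not in `F_{(m+1)}`, where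
`F_{(k)} = lowerCentralSeries F (k-1)`. -/
theorem leftComm_mem_lcs_not_mem_succ (m : ℕ) (hm : 2 ≤ m) :
    leftComm (m - 1) ∈ Subgroup.lowerCentralSeries (⊤ : Subgroup (FreeGroup (Fin 2))) (m - 1) ∧
    leftComm (m - 1) ∉ Subgroup.lowerCentralSeries (⊤ : Subgroup (FreeGroup (Fin 2))) m := by
  refine ⟨leftComm_mem_lowerCentralSeries (m - 1), ?_⟩
  have h := leftComm_notMem_lowerCentralSeries_succ (m - 1)
  rwa [Nat.sub_add_cancel (by omega)] at h
end

section
/- Let Γ = (X, E) be a simple graph and let L(X; Γ) be the free partially commutative Lie ℤ-algebra presented by generators X with relations [x, y] = 0 for all {x, y} ∈ E. If x, y ∈ X are distinct and {x, y} ∉ E, then [x, y] ≠ 0 in L(X; Γ). -/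
/-- The Lie ideal of the free Lie algebra generated by the brackets `[x,y]` of
adjacent vertices of a simple graph `Γ`. -/
noncomputable def graphLieIdeal {X : Type*} (Γ : SimpleGraph X) :
    LieIdeal ℤ (FreeLieAlgebra ℤ X) :=
  LieSubmodule.lieSpan ℤ (FreeLieAlgebra ℤ X)
    {z | ∃ x y : X, Γ.Adj x y ∧ z = ⁅FreeLieAlgebra.of ℤ x, FreeLieAlgebra.of ℤ y⁆}

/-!
Any map `f : X → L` into a Lie ring whose values at adjacent vertices commute kills the
defining ideal, so `⁅x, y⁆` survives as soon as some such `f` has `⁅f x, f y⁆ ≠ 0`. Send `x` and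
`y` to the elementary matrices `E₀₁` and `E₁₂` in `𝔤𝔩₃(ℤ)` and every other generator to `0`:
an edge meets `{x, y}` in at most one vertex, so one of its endpoints goes to `0`, while
`⁅E₀₁, E₁₂⁆ = E₀₂ ≠ 0`.
-/

open FreeLieAlgebra

attribute [local instance] LieRing.ofAssociativeRing

theorem Matrix.lie_single_single_of_ne {n R : Type*} [DecidableEq n] [Fintype n] [Ring R]
    {i k : n} (hik : i ≠ k) (j : n) (c d : R) :
    ⁅single i j c, single j k d⁆ = single i k (c * d) := by
  simp [Ring.lie_def, hik.symm]

theorem Matrix.single_ne_zero {m n R : Type*} [DecidableEq m] [DecidableEq n] [Zero R]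
    (i : m) (j : n) {c : R} (hc : c ≠ 0) : single i j c ≠ 0 := fun h =>
  hc (by simpa using congrFun₂ h i j)

section

variable {X L : Type*} [LieRing L] (Γ : SimpleGraph X)

theorem graphLieIdeal_le_ker_lift {f : X → L} (hf : ∀ u v, Γ.Adj u v → ⁅f u, f v⁆ = 0) :
    graphLieIdeal Γ ≤ (lift ℤ f).ker := by
  refine LieSubmodule.lieSpan_le.2 ?_
  rintro _ ⟨u, v, huv, rfl⟩
  exact (lift ℤ f).mem_ker.2 (by simp [hf u v huv])

theorem graphLieIdeal_mk_ne_zero_of_lift_ne_zero {f : X → L}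
    (hf : ∀ u v, Γ.Adj u v → ⁅f u, f v⁆ = 0) {z : FreeLieAlgebra ℤ X} (hz : lift ℤ f z ≠ 0) :
    LieSubmodule.Quotient.mk (N := graphLieIdeal Γ) z ≠ 0 := fun h =>
  hz (graphLieIdeal_le_ker_lift Γ hf ((LieSubmodule.Quotient.mk_eq_zero').1 h))

theorem graphLieIdeal_mk_lie_ne_zero {x y : X} (hxy : x ≠ y) (hadj : ¬ Γ.Adj x y)
    {a b : L} (hab : ⁅a, b⁆ ≠ 0) :
    LieSubmodule.Quotient.mk (N := graphLieIdeal Γ) ⁅of ℤ x, of ℤ y⁆ ≠ 0 := by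
  classical
  let f : X → L := fun u => if u = x then a else if u = y then b else 0
  refine graphLieIdeal_mk_ne_zero_of_lift_ne_zero Γ (f := f) ?_ (by simpa [f, hxy.symm])
  intro u v huv
  by_cases hu : u = x
  · subst hu
    have hvy : v ≠ y := fun hv => hadj (hv ▸ huv)
    simp [f, huv.ne.symm, hvy]
  by_cases hu' : u = y
  · subst hu'
    have hvx : v ≠ x := fun hv => hadj (hv ▸ huv.symm)
    simp [f, hvx, huv.ne.symm]
  · simp [f, hu, hu']

end

theorem pc_lie_algebra_bracket_ne_zero_general {X : Type*} (Γ : SimpleGraph X)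
    (x y : X) (hxy : x ≠ y) (hadj : ¬ Γ.Adj x y) :
    (LieSubmodule.Quotient.mk (N := graphLieIdeal Γ)
        ⁅FreeLieAlgebra.of ℤ x, FreeLieAlgebra.of ℤ y⁆ :
      FreeLieAlgebra ℤ X ⧸ graphLieIdeal Γ) ≠ 0 :=
  graphLieIdeal_mk_lie_ne_zero Γ hxy hadj
    (a := (Matrix.single 0 1 1 : Matrix (Fin 3) (Fin 3) ℤ)) (b := Matrix.single 1 2 1) <| by
      rw [Matrix.lie_single_single_of_ne (by decide)]
      exact Matrix.single_ne_zero _ _ one_ne_zero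

/-- In the free partially commutative Lie ℤ-algebra `L(X; Γ)` of a finite simple graph
`Γ`, the bracket of two distinct non-adjacent generators is nonzero. -/
theorem pc_lie_algebra_bracket_ne_zero {X : Type*} [Fintype X] (Γ : SimpleGraph X)
    (x y : X) (hxy : x ≠ y) (hadj : ¬ Γ.Adj x y) :
    (LieSubmodule.Quotient.mk (N := graphLieIdeal Γ)
        ⁅FreeLieAlgebra.of ℤ x, FreeLieAlgebra.of ℤ y⁆ :
      FreeLieAlgebra ℤ X ⧸ graphLieIdeal Γ) ≠ 0 :=
  pc_lie_algebra_bracket_ne_zero_general Γ x y hxy hadj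
end
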